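/- Let H be a Hilbert space and D ⊂ H a set of atoms with ‖g‖_H ≤ B for all g ∈ D. If f lies in the closed convex symmetric hull of D, then for every K ∈ ℕ there exist atoms g₁, …, g_K ∈ D and signs ε₁, …, ε_K ∈ {−1, +1} such that ‖f − (1/K) Σ_{k=1}^K ε_k g_k‖_H ≤ B / √K. -/
import Mathlib

open Finset
open scoped RealInnerProductSpace

-- averaging lemma
lemma avg_exists_le {ι : Type*} (t : Finset ι) (w a : ι → ℝ) (M : ℝ)
    (hw0 : ∀ i ∈ t, 0 ≤ w i) (hw1 : ∑ i ∈ t, w i = 1)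
    (h : ∑ i ∈ t, w i * a i ≤ M) : ∃ i ∈ t, a i ≤ M := by
  by_contra hc
  push_neg at hc
  obtain ⟨i0, hi0, hwi0⟩ : ∃ i ∈ t, w i ≠ 0 := by
    by_contra hz; push_neg at hz
    rw [Finset.sum_eq_zero hz] at hw1; norm_num at hw1
  have : M < ∑ i ∈ t, w i * a i := by
    calc M = ∑ i ∈ t, w i * M := by rw [← Finset.sum_mul, hw1, one_mul]
    _ < ∑ i ∈ t, w i * a i := by
        apply Finset.sum_lt_sum
        · intro i hi
          exact mul_le_mul_of_nonneg_left (hc i hi).le (hw0 i hi)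
        · exact ⟨i0, hi0, by
            have := (hw0 i0 hi0).lt_of_ne (Ne.symm hwi0)
            exact mul_lt_mul_of_pos_left (hc i0 hi0) this⟩
  linarith


lemma step_lemma {H : Type*} [NormedAddCommGroup H] [InnerProductSpace ℝ H]
    {ι : Type*} (t : Finset ι) (w : ι → ℝ) (z : ι → H) (B : ℝ)
    (hw0 : ∀ i ∈ t, 0 ≤ w i) (hw1 : ∑ i ∈ t, w i = 1)
    (hz : ∀ i ∈ t, ‖z i‖ ≤ B) (e : H) :
    ∃ i ∈ t, ‖e + (z i - ∑ j ∈ t, w j • z j)‖ ^ 2 ≤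
      ‖e‖ ^ 2 + (B ^ 2 - ‖∑ j ∈ t, w j • z j‖ ^ 2) := by
  set c : H := ∑ j ∈ t, w j • z j with hc
  apply avg_exists_le t w _ _ hw0 hw1
  have expand : ∀ i, ‖e + (z i - c)‖ ^ 2 =
      ‖e‖ ^ 2 + 2 * ⟪e, z i - c⟫ + (‖z i‖ ^ 2 - 2 * ⟪z i, c⟫ + ‖c‖ ^ 2) := by
    intro i
    rw [norm_add_sq_real, norm_sub_sq_real]
  have h1 : ∑ i ∈ t, w i * ⟪e, z i - c⟫ = 0 := by
    have : ∑ i ∈ t, w i * ⟪e, z i - c⟫ = ⟪e, ∑ i ∈ t, w i • (z i - c)⟫ := by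
      rw [inner_sum]
      exact Finset.sum_congr rfl fun i _ => (real_inner_smul_right e _ (w i)).symm
    rw [this]
    have : ∑ i ∈ t, w i • (z i - c) = 0 := by
      simp only [smul_sub, Finset.sum_sub_distrib, ← hc, ← Finset.sum_smul, hw1, one_smul,
        sub_self]
    rw [this, inner_zero_right]
  have h2 : ∑ i ∈ t, w i * ⟪z i, c⟫ = ‖c‖ ^ 2 := by
    have : ∑ i ∈ t, w i * ⟪z i, c⟫ = ⟪c, c⟫ := by
      rw [hc, sum_inner]
      exact Finset.sum_congr rfl fun i _ => (real_inner_smul_left (z i) c (w i)).symm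
    rw [this, real_inner_self_eq_norm_sq]
  have h3 : ∑ i ∈ t, w i * ‖z i‖ ^ 2 ≤ B ^ 2 := by
    calc ∑ i ∈ t, w i * ‖z i‖ ^ 2 ≤ ∑ i ∈ t, w i * B ^ 2 := by
          apply Finset.sum_le_sum
          intro i hi
          exact mul_le_mul_of_nonneg_left
            (pow_le_pow_left₀ (norm_nonneg _) (hz i hi) 2) (hw0 i hi)
      _ = B ^ 2 := by rw [← Finset.sum_mul, hw1, one_mul]
  calc ∑ i ∈ t, w i * ‖e + (z i - c)‖ ^ 2
      = ∑ i ∈ t, (w i * ‖e‖ ^ 2 + 2 * (w i * ⟪e, z i - c⟫)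
          + (w i * ‖z i‖ ^ 2 - 2 * (w i * ⟪z i, c⟫) + w i * ‖c‖ ^ 2)) := by
        refine Finset.sum_congr rfl fun i _ => ?_
        rw [expand i]; ring
    _ = ‖e‖ ^ 2 + 2 * 0 + ((∑ i ∈ t, w i * ‖z i‖ ^ 2) - 2 * ‖c‖ ^ 2 + ‖c‖ ^ 2) := by
        simp only [Finset.sum_add_distrib, Finset.sum_sub_distrib, ← Finset.mul_sum,
          ← Finset.sum_mul, hw1, one_mul, h1, h2]
    _ ≤ ‖e‖ ^ 2 + (B ^ 2 - ‖c‖ ^ 2) := by nlinarith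

lemma iter_lemma {H : Type*} [NormedAddCommGroup H] [InnerProductSpace ℝ H]
    {ι : Type*} (t : Finset ι) (w : ι → ℝ) (z : ι → H) (B : ℝ)
    (hw0 : ∀ i ∈ t, 0 ≤ w i) (hw1 : ∑ i ∈ t, w i = 1)
    (hz : ∀ i ∈ t, ‖z i‖ ≤ B) (n : ℕ) :
    ∃ j : Fin n → ι, (∀ k, j k ∈ t) ∧
      ‖(∑ k, z (j k)) - (n : ℝ) • (∑ i ∈ t, w i • z i)‖ ^ 2 ≤
        n * (B ^ 2 - ‖∑ i ∈ t, w i • z i‖ ^ 2) := by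
  set c : H := ∑ i ∈ t, w i • z i with hc
  induction n with
  | zero =>
    refine ⟨Fin.elim0, fun k => k.elim0, ?_⟩
    simp
  | succ n ih =>
    obtain ⟨j, hjt, hj⟩ := ih
    obtain ⟨i, hit, hi⟩ := step_lemma t w z B hw0 hw1 hz ((∑ k, z (j k)) - (n : ℝ) • c)
    refine ⟨Fin.snoc j i, ?_, ?_⟩
    · intro k
      induction k using Fin.lastCases with
      | last => simpa using hit
      | cast k => simpa using hjt k
    · have hsum : (∑ k : Fin (n + 1), z ((Fin.snoc j i : Fin (n + 1) → ι) k)) = (∑ k : Fin n, z (j k)) + z i := by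
        rw [Fin.sum_univ_castSucc]
        simp
      have hre : (∑ k : Fin (n + 1), z ((Fin.snoc j i : Fin (n + 1) → ι) k)) - ((n : ℝ) + 1) • c =
          ((∑ k : Fin n, z (j k)) - (n : ℝ) • c) + (z i - c) := by
        rw [hsum, add_smul, one_smul]; abel
      push_cast
      rw [hre]
      calc ‖((∑ k : Fin n, z (j k)) - (n : ℝ) • c) + (z i - c)‖ ^ 2
          ≤ ‖(∑ k : Fin n, z (j k)) - (n : ℝ) • c‖ ^ 2 + (B ^ 2 - ‖c‖ ^ 2) := hi
        _ ≤ n * (B ^ 2 - ‖c‖ ^ 2) + (B ^ 2 - ‖c‖ ^ 2) := by linarith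
        _ = ((n : ℝ) + 1) * (B ^ 2 - ‖c‖ ^ 2) := by ring

lemma sign_decomp {H : Type*} [NormedAddCommGroup H] [InnerProductSpace ℝ H]
    (D : Set H) (v : H) (hv : v ∈ D ∪ (-D)) :
    ∃ (ε : ℝ) (g : H), g ∈ D ∧ (ε = 1 ∨ ε = -1) ∧ ε • g = v := by
  rcases hv with h | h
  · exact ⟨1, v, h, Or.inl rfl, one_smul ℝ v⟩
  · exact ⟨-1, -v, Set.mem_neg.mp h, Or.inr rfl, by simp⟩

lemma hull_approx {H : Type*} [NormedAddCommGroup H] [InnerProductSpace ℝ H]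
    (D : Set H) (B : ℝ) (hB : ∀ g ∈ D, ‖g‖ ≤ B)
    (f' : H) (hf' : f' ∈ convexHull ℝ (D ∪ (-D))) (K : ℕ) (hK : 0 < K) :
    ∃ (g : Fin K → H) (ε : Fin K → ℝ), (∀ k, g k ∈ D) ∧ (∀ k, ε k = 1 ∨ ε k = -1) ∧
      ‖f' - (K : ℝ)⁻¹ • ∑ k, ε k • g k‖ ^ 2 ≤ (B ^ 2 - ‖f'‖ ^ 2) / K := by
  rw [_root_.convexHull_eq] at hf'
  obtain ⟨ι, t, w, z, hw0, hw1, hzmem, hcm⟩ := hf'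
  rw [Finset.centerMass_eq_of_sum_1 _ _ hw1] at hcm
  have hz : ∀ i ∈ t, ‖z i‖ ≤ B := by
    intro i hi
    rcases hzmem i hi with h | h
    · exact hB _ h
    · rw [← norm_neg]; exact hB _ (Set.mem_neg.mp h)
  obtain ⟨j, hjt, hj⟩ := iter_lemma t w z B hw0 hw1 hz K
  rw [hcm] at hj
  choose ε g hgD hε hεg using fun k => sign_decomp D (z (j k)) (hzmem (j k) (hjt k))
  refine ⟨g, ε, hgD, hε, ?_⟩
  have hKpos : (0 : ℝ) < K := by exact_mod_cast hK
  have hsum : ∑ k, ε k • g k = ∑ k, z (j k) := Finset.sum_congr rfl fun k _ => hεg k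
  have hre : f' - (K : ℝ)⁻¹ • ∑ k, ε k • g k =
      -((K : ℝ)⁻¹ • ((∑ k, z (j k)) - (K : ℝ) • f')) := by
    rw [hsum, smul_sub, smul_smul, inv_mul_cancel₀ hKpos.ne', one_smul]
    abel
  rw [hre, norm_neg, norm_smul, norm_inv, Real.norm_natCast, mul_pow]
  calc ((K : ℝ)⁻¹) ^ 2 * ‖(∑ k, z (j k)) - (K : ℝ) • f'‖ ^ 2
      ≤ ((K : ℝ)⁻¹) ^ 2 * ((K : ℝ) * (B ^ 2 - ‖f'‖ ^ 2)) :=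
        mul_le_mul_of_nonneg_left hj (by positivity)
    _ = (B ^ 2 - ‖f'‖ ^ 2) / K := by
        field_simp

set_option maxHeartbeats 800000 in
/-- Maurey–Pisier / Jones–Barron: if every atom of `D` in a Hilbert space has norm
at most `B` and `f` lies in the closed convex symmetric hull of `D`, then for every
`K` there are atoms `g₁, …, g_K ∈ D` and signs `ε_k ∈ {±1}` with
`‖f - (1/K) Σ ε_k g_k‖ ≤ B/√K`. -/
theorem maurey_convex_hull_approx {H : Type*} [NormedAddCommGroup H]
    [InnerProductSpace ℝ H] [CompleteSpace H]
    (D : Set H) (B : ℝ) (hB : ∀ g ∈ D, ‖g‖ ≤ B)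
    (f : H) (hf : f ∈ closure (convexHull ℝ (D ∪ (-D))))
    (K : ℕ) (hK : 0 < K) :
    ∃ (g : Fin K → H) (ε : Fin K → ℝ), (∀ k, g k ∈ D) ∧ (∀ k, ε k = 1 ∨ ε k = -1) ∧
      ‖f - (K : ℝ)⁻¹ • ∑ k, ε k • g k‖ ≤ B / Real.sqrt K := by
  have hne : (D ∪ (-D)).Nonempty := by
    rcases Set.eq_empty_or_nonempty (D ∪ (-D)) with h | h
    · rw [h, convexHull_empty, closure_empty] at hf
      exact absurd hf (Set.notMem_empty f)
    · exact h
  obtain ⟨g₀, hg₀⟩ : D.Nonempty := by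
    rcases hne with ⟨v, hv | hv⟩
    · exact ⟨v, hv⟩
    · exact ⟨-v, Set.mem_neg.mp hv⟩
  have hB0 : 0 ≤ B := le_trans (norm_nonneg g₀) (hB g₀ hg₀)
  have hKpos : (0 : ℝ) < K := by exact_mod_cast hK
  have hK1 : (1 : ℝ) ≤ K := by exact_mod_cast hK
  set s : ℝ := Real.sqrt K with hs
  have hs2 : s ^ 2 = K := Real.sq_sqrt hKpos.le
  have hspos : 0 < s := Real.sqrt_pos.mpr hKpos
  have hball : convexHull ℝ (D ∪ (-D)) ⊆ Metric.closedBall 0 B := by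
    apply convexHull_min _ (convex_closedBall 0 B)
    rintro v (hv | hv)
    · simpa [Metric.mem_closedBall, dist_zero_right] using hB v hv
    · rw [Metric.mem_closedBall, dist_zero_right, ← norm_neg]
      exact hB _ (Set.mem_neg.mp hv)
  have hfB : ‖f‖ ≤ B := by
    have h1 : f ∈ Metric.closedBall (0 : H) B :=
      closure_minimal hball Metric.isClosed_closedBall hf
    simpa [Metric.mem_closedBall, dist_zero_right] using h1
  rcases eq_or_lt_of_le (norm_nonneg f) with hf0 | hfpos
  · -- f = 0 case
    have hf0' : f = 0 := norm_eq_zero.mp hf0.symm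
    refine ⟨fun _ => g₀, fun k => (-1 : ℝ) ^ (k : ℕ), fun _ => hg₀, ?_, ?_⟩
    · intro k
      rcases Nat.even_or_odd (k : ℕ) with h | h
      · exact Or.inl (Even.neg_one_pow h)
      · exact Or.inr (Odd.neg_one_pow h)
    · have hsum : (∑ k : Fin K, ((-1 : ℝ) ^ (k : ℕ)) • g₀) =
          (if Even K then (0 : ℝ) else 1) • g₀ := by
        rw [← Finset.sum_smul]
        congr 1
        rw [Fin.sum_univ_eq_sum_range (fun i => (-1 : ℝ) ^ i) K]
        exact neg_one_geom_sum
      rw [hf0', hsum, zero_sub, norm_neg, norm_smul, norm_smul, norm_inv,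
        Real.norm_natCast]
      have hc : ‖(if Even K then (0 : ℝ) else 1)‖ ≤ 1 := by
        split_ifs <;> simp
      have hsK : s ≤ K := by nlinarith [hs2, hspos, hK1, sq_nonneg (s - 1)]
      calc (K : ℝ)⁻¹ * (‖(if Even K then (0 : ℝ) else 1)‖ * ‖g₀‖)
          ≤ (K : ℝ)⁻¹ * (1 * B) := by
            apply mul_le_mul_of_nonneg_left _ (by positivity)
            exact mul_le_mul hc (hB g₀ hg₀) (norm_nonneg _) zero_le_one
        _ = B / K := by ring
        _ ≤ B / s := by
            apply div_le_div_of_nonneg_left hB0 hspos hsK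
  · -- ‖f‖ > 0 case
    set m : ℝ := ‖f‖ with hm
    have hmB : m ≤ B := hfB
    set δ : ℝ := m ^ 2 / (2 * (m + B * s)) with hδ
    have hden : 0 < 2 * (m + B * s) := by positivity
    have hδpos : 0 < δ := by positivity
    have hδeq : 2 * δ * (m + B * s) = m ^ 2 := by
      rw [hδ]; field_simp
    have hδm : δ ≤ m := by
      rw [hδ, div_le_iff₀ hden]
      nlinarith [mul_nonneg (mul_nonneg hfpos.le hB0) hspos.le, sq_nonneg m]
    obtain ⟨f', hf'mem, hf'dist⟩ := Metric.mem_closure_iff.mp hf δ hδpos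
    rw [dist_eq_norm] at hf'dist
    have hf'B : ‖f'‖ ≤ B := by
      have := hball hf'mem
      simpa [Metric.mem_closedBall, dist_zero_right] using this
    have hlow : m - δ ≤ ‖f'‖ := by
      have : m ≤ ‖f - f'‖ + ‖f'‖ := by
        calc m = ‖(f - f') + f'‖ := by rw [hm]; congr 1; abel
          _ ≤ ‖f - f'‖ + ‖f'‖ := norm_add_le _ _
      linarith
    obtain ⟨g, ε, hgD, hε, hsq⟩ := hull_approx D B hB f' hf'mem K hK
    refine ⟨g, ε, hgD, hε, ?_⟩
    have hy0 : 0 ≤ B / s - δ := by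
      have hms : m ^ 2 * s ≤ 2 * B * m + 2 * B ^ 2 * s := by
        nlinarith [mul_nonneg (mul_nonneg (sub_nonneg.mpr hmB)
          (by linarith : (0:ℝ) ≤ B + m)) hspos.le, mul_nonneg hB0 hfpos.le,
          mul_nonneg (mul_nonneg hB0 hB0) hspos.le]
      have h1 : δ * s ≤ B := by
        rw [hδ, div_mul_eq_mul_div, div_le_iff₀ hden]
        nlinarith
      have h2 : δ ≤ B / s := (le_div_iff₀ hspos).mpr h1
      linarith
    have key : (B ^ 2 - ‖f'‖ ^ 2) / K ≤ (B / s - δ) ^ 2 := by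
      have h1 : (m - δ) ^ 2 ≤ ‖f'‖ ^ 2 := by nlinarith
      have h2 : 2 * B * δ * s ≤ (m - δ) ^ 2 + δ ^ 2 * s ^ 2 := by nlinarith
      rw [div_le_iff₀ hKpos, ← hs2]
      have hexp : (B / s - δ) ^ 2 * s ^ 2 = B ^ 2 - 2 * B * δ * s + δ ^ 2 * s ^ 2 := by
        field_simp; ring
      rw [hexp]
      nlinarith
    have hnorm2 : ‖f' - (K : ℝ)⁻¹ • ∑ k, ε k • g k‖ ≤ B / s - δ := by
      have := le_trans hsq key
      nlinarith [norm_nonneg (f' - (K : ℝ)⁻¹ • ∑ k, ε k • g k)]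
    calc ‖f - (K : ℝ)⁻¹ • ∑ k, ε k • g k‖
        ≤ ‖f - f'‖ + ‖f' - (K : ℝ)⁻¹ • ∑ k, ε k • g k‖ := by
          rw [show f - (K : ℝ)⁻¹ • ∑ k, ε k • g k =
            (f - f') + (f' - (K : ℝ)⁻¹ • ∑ k, ε k • g k) by abel]
          exact norm_add_le _ _
      _ ≤ δ + (B / s - δ) := add_le_add hf'dist.le hnorm2
      _ = B / s := by ring
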